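/- arXiv:2410.04933 — 5 statements merged into one kernel-verified Lean document; each statement's English description precedes it below -/
import Mathlib

section
/- For z₁=(t₁,x₁,v₁), z₂=(t₂,x₂,v₂) ∈ ℝ×ℝᵈ×ℝᵈ with t₁,t₂ ≤ 0 and radii r₁,r₂ > 0, if the kinetic cylinders Q_{r₁}(z₁) and Q_{r₂}(z₂) intersect and r₁ ≤ 2r₂, then Q_{r₁}(z₁) ⊆ Q_{5r₂}(z₂ ∘ (τ,0,0)) where τ = min(−t₂, 12 r₂²). -/
open scoped RealInnerProductSpace

/-- The Galilean group law on `ℝ × ℝᵈ × ℝᵈ`. -/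
noncomputable def kMul {d : ℕ} (z₀ z : ℝ × EuclideanSpace ℝ (Fin d) × EuclideanSpace ℝ (Fin d)) :
    ℝ × EuclideanSpace ℝ (Fin d) × EuclideanSpace ℝ (Fin d) :=
  (z₀.1 + z.1, z₀.2.1 + z.2.1 + z.1 • z₀.2.2, z₀.2.2 + z.2.2)

/-- The kinetic cylinder of radius `r` centered at `z₀`. -/
def kCyl {d : ℕ} (r : ℝ) (z₀ : ℝ × EuclideanSpace ℝ (Fin d) × EuclideanSpace ℝ (Fin d)) :
    Set (ℝ × EuclideanSpace ℝ (Fin d) × EuclideanSpace ℝ (Fin d)) :=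
  {z | -r ^ 2 < z.1 - z₀.1 ∧ z.1 - z₀.1 ≤ 0 ∧
    ‖z.2.1 - z₀.2.1 - (z.1 - z₀.1) • z₀.2.2‖ < r ^ 3 ∧ ‖z.2.2 - z₀.2.2‖ < r}

theorem stmt0 {d : ℕ}
    (z₁ z₂ : ℝ × EuclideanSpace ℝ (Fin d) × EuclideanSpace ℝ (Fin d))
    (ht₁ : z₁.1 ≤ 0) (ht₂ : z₂.1 ≤ 0)
    (r₁ r₂ : ℝ) (hr₁ : 0 < r₁) (hr₂ : 0 < r₂)
    (hmeet : (kCyl r₁ z₁ ∩ kCyl r₂ z₂).Nonempty)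
    (hle : r₁ ≤ 2 * r₂) :
    kCyl r₁ z₁ ⊆ kCyl (5 * r₂) (kMul z₂ (min (-z₂.1) (12 * r₂ ^ 2), 0, 0)) := by
  obtain ⟨w, hw1, hw2⟩ := hmeet
  obtain ⟨t₁, x₁, v₁⟩ := z₁
  obtain ⟨t₂, x₂, v₂⟩ := z₂
  obtain ⟨s, y, u⟩ := w
  simp only [kCyl, kMul, Set.mem_setOf_eq] at hw1 hw2 ht₁ ht₂ ⊢
  obtain ⟨h1a, h1b, h1c, h1d⟩ := hw1
  obtain ⟨h2a, h2b, h2c, h2d⟩ := hw2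
  rintro ⟨t, x, v⟩ ⟨hza, hzb, hzc, hzd⟩
  simp only [Set.mem_setOf_eq] at hza hzb hzc hzd ⊢
  set τ : ℝ := min (-t₂) (12 * r₂ ^ 2) with hτ
  have hτ2 : τ ≤ 12 * r₂ ^ 2 := min_le_right _ _
  have hr₁sq : r₁ ^ 2 ≤ 4 * r₂ ^ 2 := by nlinarith
  have hv12 : ‖v₁ - v₂‖ < r₁ + r₂ := by
    calc ‖v₁ - v₂‖ ≤ ‖v₁ - u‖ + ‖u - v₂‖ := by
          have := norm_add_le (v₁ - u) (u - v₂)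
          simpa using this
      _ < r₁ + r₂ := by
          have : ‖v₁ - u‖ = ‖u - v₁‖ := norm_sub_rev _ _
          rw [this]; exact add_lt_add h1d h2d
  refine ⟨?_, ?_, ?_, ?_⟩
  · -- lower time bound
    nlinarith [h1a, h1b, h2a, h2b, hza, hzb]
  · -- upper time bound
    rcases min_cases (-t₂) (12 * r₂ ^ 2) with ⟨he, hm⟩ | ⟨he, hm⟩ <;> rw [hτ, he] <;>
      nlinarith [h1a, h1b, h2a, h2b, hza, hzb]
  · -- spatial bound
    have hid : x - (x₂ + (0 : EuclideanSpace ℝ (Fin d)) + τ • v₂)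
        - (t - (t₂ + τ)) • (v₂ + (0 : EuclideanSpace ℝ (Fin d)))
        = (x - x₁ - (t - t₁) • v₁) + (y - x₂ - (s - t₂) • v₂)
          - (y - x₁ - (s - t₁) • v₁) + (t - s) • (v₁ - v₂) := by
      module
    rw [hid]
    have hts : |t - s| < r₁ ^ 2 := by
      rw [abs_lt]; constructor <;> linarith
    have hmul : |t - s| * ‖v₁ - v₂‖ ≤ r₁ ^ 2 * (r₁ + r₂) :=
      mul_le_mul hts.le hv12.le (norm_nonneg _) (by positivity)
    calc ‖(x - x₁ - (t - t₁) • v₁) + (y - x₂ - (s - t₂) • v₂)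
          - (y - x₁ - (s - t₁) • v₁) + (t - s) • (v₁ - v₂)‖
        ≤ ‖x - x₁ - (t - t₁) • v₁‖ + ‖y - x₂ - (s - t₂) • v₂‖
          + ‖y - x₁ - (s - t₁) • v₁‖ + ‖(t - s) • (v₁ - v₂)‖ := by
          refine le_trans (norm_add_le _ _) ?_
          gcongr
          refine le_trans (norm_sub_le _ _) ?_
          gcongr
          exact norm_add_le _ _
      _ < (5 * r₂) ^ 3 := by
          rw [norm_smul, Real.norm_eq_abs]
          nlinarith [hzc, h2c, h1c, hmul, norm_nonneg (x - x₁ - (t - t₁) • v₁)]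
  · -- velocity bound
    have : ‖v - (v₂ + (0 : EuclideanSpace ℝ (Fin d)))‖ ≤ ‖v - v₁‖ + ‖v₁ - v₂‖ := by
      have := norm_add_le (v - v₁) (v₁ - v₂)
      simpa using this
    calc ‖v - (v₂ + (0 : EuclideanSpace ℝ (Fin d)))‖ ≤ ‖v - v₁‖ + ‖v₁ - v₂‖ := this
      _ < 5 * r₂ := by linarith
end

section
/- Let (Q_j)_{j∈J} be a collection of kinetic cylinders Q_{r_j}(z_j) in (−∞,0]×ℝᵈ×ℝᵈ with uniformly bounded radii. Then there exists a countable subset I ⊆ J such that the cylinders (Q_i)_{i∈I} are pairwise disjoint and ⋃_{j∈J} Q_j ⊆ ⋃_{i∈I} 5Q_i, where 5Q_{r}(z₀) := Q_{5r}(z₀ ∘ (min(−t₀,12r²),0,0)). -/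
/-- The shifted and scaled cylinder `5Q_r(z₀)`. -/
noncomputable def kCyl5 {d : ℕ} (r : ℝ)
    (z₀ : ℝ × EuclideanSpace ℝ (Fin d) × EuclideanSpace ℝ (Fin d)) :
    Set (ℝ × EuclideanSpace ℝ (Fin d) × EuclideanSpace ℝ (Fin d)) :=
  kCyl (5 * r) (kMul z₀ (min (-z₀.1) (12 * r ^ 2), 0, 0))

section KineticCylinder

variable {d : ℕ}

local notation "E" => EuclideanSpace ℝ (Fin d)

/-- `x - x₀ - (t - t₀) v₀`: the position of `p` relative to the free-transport trajectory
through `z₀`. -/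
def kinDisp (p z₀ : ℝ × E × E) : E :=
  p.2.1 - z₀.2.1 - (p.1 - z₀.1) • z₀.2.2

@[fun_prop]
lemma continuous_kinDisp (z₀ : ℝ × E × E) : Continuous (kinDisp · z₀) := by
  unfold kinDisp
  fun_prop

lemma kinDisp_kMul_time (p z₀ : ℝ × E × E) (s : ℝ) :
    kinDisp p (kMul z₀ (s, 0, 0)) = kinDisp p z₀ := by
  simp only [kinDisp, kMul]
  module

lemma kinDisp_eq_add (p w za zb : ℝ × E × E) :
    kinDisp p zb =
      kinDisp p za - kinDisp w za + kinDisp w zb + (p.1 - w.1) • (za.2.2 - zb.2.2) := by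
  simp only [kinDisp]
  module

lemma pos_of_mem_kCyl {r : ℝ} {p z₀ : ℝ × E × E} (hp : p ∈ kCyl r z₀) : 0 < r :=
  (norm_nonneg _).trans_lt hp.2.2.2

lemma mem_kCyl_self {r : ℝ} (hr : 0 < r) (z₀ : ℝ × E × E) : z₀ ∈ kCyl r z₀ := by
  refine ⟨by nlinarith, by simp, ?_, by simpa using hr⟩
  simpa using by positivity

lemma interior_kCyl_nonempty {r : ℝ} (hr : 0 < r) (z₀ : ℝ × E × E) :
    (interior (kCyl r z₀)).Nonempty := by
  let U : Set (ℝ × E × E) := {q | -r ^ 2 < q.1 - z₀.1 ∧ q.1 - z₀.1 < 0 ∧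
      ‖kinDisp q z₀‖ < r ^ 3 ∧ ‖q.2.2 - z₀.2.2‖ < r}
  have hU : IsOpen U := by
    refine (isOpen_lt ?_ ?_).and ((isOpen_lt ?_ ?_).and ((isOpen_lt ?_ ?_).and
      (isOpen_lt ?_ ?_))) <;> fun_prop
  have hUsub : U ⊆ kCyl r z₀ := fun q ⟨h₁, h₂, h₃, h₄⟩ => ⟨h₁, h₂.le, h₃, h₄⟩
  refine ⟨kMul z₀ (-(r ^ 2 / 2), 0, 0), interior_maximal hUsub hU ?_⟩
  refine ⟨?_, ?_, ?_, ?_⟩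
  · simp only [kMul]; nlinarith
  · simp only [kMul]; nlinarith
  · have h₀ : kinDisp (kMul z₀ (-(r ^ 2 / 2), 0, 0)) z₀ = 0 := by
      simp only [kinDisp, kMul]
      module
    simpa [h₀] using pow_pos hr 3
  · simpa [kMul] using hr

lemma norm_vel_sub_lt_of_mem_inter {ra rb : ℝ} {w za zb : ℝ × E × E}
    (hwa : w ∈ kCyl ra za) (hwb : w ∈ kCyl rb zb) : ‖za.2.2 - zb.2.2‖ < ra + rb :=
  calc ‖za.2.2 - zb.2.2‖ ≤ ‖w.2.2 - za.2.2‖ + ‖w.2.2 - zb.2.2‖ := by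
        simpa only [norm_sub_rev za.2.2] using
          norm_sub_le_norm_sub_add_norm_sub za.2.2 w.2.2 zb.2.2
    _ < ra + rb := add_lt_add hwa.2.2.2 hwb.2.2.2

lemma norm_kinDisp_lt_of_mem_inter {ra rb : ℝ} {p w za zb : ℝ × E × E}
    (hp : p ∈ kCyl ra za) (hwa : w ∈ kCyl ra za) (hwb : w ∈ kCyl rb zb) (hab : ra ≤ 2 * rb) :
    ‖kinDisp p zb‖ < (5 * rb) ^ 3 := by
  have hra := pos_of_mem_kCyl hp
  have hrb := pos_of_mem_kCyl hwb
  have hT : |p.1 - w.1| ≤ ra ^ 2 :=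
    abs_le.2 ⟨by linarith [hp.1, hwa.2.1], by linarith [hp.2.1, hwa.1]⟩
  have hV : ‖za.2.2 - zb.2.2‖ ≤ ra + rb := (norm_vel_sub_lt_of_mem_inter hwa hwb).le
  have hD : ‖(p.1 - w.1) • (za.2.2 - zb.2.2)‖ ≤ ra ^ 2 * (ra + rb) := by
    rw [norm_smul, Real.norm_eq_abs]
    exact mul_le_mul hT hV (norm_nonneg _) (by positivity)
  have h₁ : ‖kinDisp p za‖ < ra ^ 3 := hp.2.2.1
  have h₂ : ‖kinDisp w za‖ < ra ^ 3 := hwa.2.2.1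
  have h₃ : ‖kinDisp w zb‖ < rb ^ 3 := hwb.2.2.1
  have hra3 : ra ^ 3 ≤ (2 * rb) ^ 3 := pow_le_pow_left₀ hra.le hab 3
  have hra2 : ra ^ 2 * (ra + rb) ≤ (2 * rb) ^ 2 * (3 * rb) :=
    mul_le_mul (pow_le_pow_left₀ hra.le hab 2) (by linarith) (by positivity) (by positivity)
  calc ‖kinDisp p zb‖
      ≤ ‖kinDisp p za‖ + ‖kinDisp w za‖ + ‖kinDisp w zb‖
          + ‖(p.1 - w.1) • (za.2.2 - zb.2.2)‖ := by
        rw [kinDisp_eq_add p w za zb]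
        refine norm_add₃_le.trans ?_
        gcongr
        exact norm_sub_le _ _
    _ < (5 * rb) ^ 3 := by nlinarith

/-- The shifted centre of `5Q_{r_b}` stays on the trajectory of `z_b`, so the shift only affects
the time constraint. -/
lemma kCyl_subset_kCyl5_of_inter {ra rb : ℝ} {za zb : ℝ × E × E} (hta : za.1 ≤ 0)
    (hab : ra ≤ 2 * rb) (hne : (kCyl ra za ∩ kCyl rb zb).Nonempty) :
    kCyl ra za ⊆ kCyl5 rb zb := by
  obtain ⟨w, hwa, hwb⟩ := hne
  intro p hp
  have hra2 : ra ^ 2 ≤ (2 * rb) ^ 2 := pow_le_pow_left₀ (pos_of_mem_kCyl hp).le hab 2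
  set s := min (-zb.1) (12 * rb ^ 2)
  have hs : s ≤ 12 * rb ^ 2 := min_le_right _ _
  have hps : p.1 - zb.1 ≤ s :=
    le_min (by linarith [hp.2.1]) (by linarith [hp.2.1, hwa.1, hwb.2.1, sq_nonneg rb])
  refine ⟨?_, ?_, ?_, ?_⟩
  · show -(5 * rb) ^ 2 < p.1 - (zb.1 + s)
    linarith [hp.1, hwa.2.1, hwb.1]
  · show p.1 - (zb.1 + s) ≤ 0
    linarith
  · show ‖kinDisp p (kMul zb (s, 0, 0))‖ < (5 * rb) ^ 3
    rw [kinDisp_kMul_time]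
    exact norm_kinDisp_lt_of_mem_inter hp hwa hwb hab
  · show ‖p.2.2 - (zb.2.2 + 0)‖ < 5 * rb
    rw [add_zero]
    linarith [norm_sub_le_norm_sub_add_norm_sub p.2.2 za.2.2 zb.2.2, hp.2.2.2,
      norm_vel_sub_lt_of_mem_inter hwa hwb]

end KineticCylinder

theorem stmt1 {d : ℕ} {J : Type*}
    (z : J → ℝ × EuclideanSpace ℝ (Fin d) × EuclideanSpace ℝ (Fin d))
    (r : J → ℝ)
    (ht : ∀ j, (z j).1 ≤ 0) (hr : ∀ j, 0 < r j)
    (hbd : ∃ M : ℝ, ∀ j, r j ≤ M) :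
    ∃ I : Set J, I.Countable ∧
      (I.PairwiseDisjoint fun i => kCyl (r i) (z i)) ∧
      (⋃ j, kCyl (r j) (z j)) ⊆ ⋃ i ∈ I, kCyl5 (r i) (z i) := by
  obtain ⟨M, hM⟩ := hbd
  obtain ⟨I, -, hdisj, hcov⟩ :=
    Vitali.exists_disjoint_subfamily_covering_enlargement (fun j => kCyl (r j) (z j)) Set.univ r 2
      one_lt_two (fun j _ => (hr j).le) M (fun j _ => hM j)
      (fun j _ => ⟨z j, mem_kCyl_self (hr j) (z j)⟩)
  refine ⟨I, hdisj.countable_of_nonempty_interior fun i _ => interior_kCyl_nonempty (hr i) (z i),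
    hdisj, Set.iUnion_subset fun j => ?_⟩
  obtain ⟨i, hi, hinter, hle⟩ := hcov j (Set.mem_univ j)
  exact (kCyl_subset_kCyl5_of_inter (ht j) hle hinter).trans
    (Set.subset_biUnion_of_mem (u := fun i => kCyl5 (r i) (z i)) hi)
end

section
/- Let γ > 1 and define ζ as the localization function ζ(t,x,v) = (1/2) min( (γ−|v|)₊/5, ((γ²+t)₊/13)^{1/2}, ((γ³−|x|)₊/(25γ))^{1/2} ). If z₀ = (t₀,x₀,v₀) ∈ Q_γ and 0 < r ≤ 2ζ(z₀), then the shifted scaled cylinder 5Q_r(z₀) = Q_{5r}(z₀ ∘ (min(−t₀,12r²),0,0)) is contained in Q_γ. -/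
/-- The localization function `ζ` of the cylinder `Q_γ`. -/
noncomputable def kZeta {d : ℕ} (γ : ℝ)
    (z : ℝ × EuclideanSpace ℝ (Fin d) × EuclideanSpace ℝ (Fin d)) : ℝ :=
  (1 / 2) * min (max (γ - ‖z.2.2‖) 0 / 5)
    (min (Real.sqrt (max (γ ^ 2 + z.1) 0 / 13))
      (Real.sqrt (max (γ ^ 3 - ‖z.2.1‖) 0 / (25 * γ))))

set_option maxHeartbeats 1000000 in
theorem stmt3 {d : ℕ} (γ : ℝ) (hγ : 1 < γ)
    (z₀ : ℝ × EuclideanSpace ℝ (Fin d) × EuclideanSpace ℝ (Fin d))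
    (hz₀ : z₀ ∈ kCyl γ (0, 0, 0))
    (r : ℝ) (hr : 0 < r) (hrζ : r ≤ 2 * kZeta γ z₀) :
    kCyl5 r z₀ ⊆ kCyl γ (0, 0, 0) := by

  obtain ⟨t₀, x₀, v₀⟩ := z₀
  simp only [kCyl, Set.mem_setOf_eq, sub_zero, smul_zero] at hz₀
  obtain ⟨ht₀, ht₀', hx₀, hv₀⟩ := hz₀
  simp only [kZeta] at hrζ
  have hm : r ≤ min (max (γ - ‖v₀‖) 0 / 5)
      (min (Real.sqrt (max (γ ^ 2 + t₀) 0 / 13))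
        (Real.sqrt (max (γ ^ 3 - ‖x₀‖) 0 / (25 * γ)))) := by linarith
  have hA : 5 * r ≤ γ - ‖v₀‖ := by
    have h := hm.trans (min_le_left _ _)
    rcases le_max_iff.mp (by linarith : 5 * r ≤ max (γ - ‖v₀‖) 0) with h' | h'
    · exact h'
    · linarith
  have hB : 13 * r ^ 2 ≤ γ ^ 2 + t₀ := by
    have h := hm.trans ((min_le_right _ _).trans (min_le_left _ _))
    have h2 : r ^ 2 ≤ max (γ ^ 2 + t₀) 0 / 13 := by
      nlinarith [Real.sq_sqrt (show (0:ℝ) ≤ max (γ ^ 2 + t₀) 0 / 13 by positivity),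
        Real.sqrt_nonneg (max (γ ^ 2 + t₀) 0 / 13)]
    rcases le_max_iff.mp (by linarith : 13 * r ^ 2 ≤ max (γ ^ 2 + t₀) 0) with h' | h'
    · exact h'
    · nlinarith
  have hC : 25 * γ * r ^ 2 ≤ γ ^ 3 - ‖x₀‖ := by
    have h := hm.trans ((min_le_right _ _).trans (min_le_right _ _))
    have h2 : r ^ 2 ≤ max (γ ^ 3 - ‖x₀‖) 0 / (25 * γ) := by
      nlinarith [Real.sq_sqrt (show (0:ℝ) ≤ max (γ ^ 3 - ‖x₀‖) 0 / (25 * γ) by positivity),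
        Real.sqrt_nonneg (max (γ ^ 3 - ‖x₀‖) 0 / (25 * γ))]
    have h3 : r ^ 2 * (25 * γ) ≤ max (γ ^ 3 - ‖x₀‖) 0 := (le_div_iff₀ (by positivity)).mp h2
    rcases le_max_iff.mp (by nlinarith : 25 * γ * r ^ 2 ≤ max (γ ^ 3 - ‖x₀‖) 0) with h' | h'
    · exact h'
    · nlinarith
  rintro ⟨t, x, v⟩ hz
  simp only [kCyl5, kMul, kCyl, Set.mem_setOf_eq] at hz
  obtain ⟨h1, h2, h3, h4⟩ := hz
  set s := min (-t₀) (12 * r ^ 2) with hs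
  have hs0 : 0 ≤ s := le_min (by linarith) (by positivity)
  have hs1 : s ≤ -t₀ := min_le_left _ _
  have hs2 : s ≤ 12 * r ^ 2 := min_le_right _ _
  simp only [kCyl, Set.mem_setOf_eq, sub_zero, smul_zero]
  have hvv : ‖v‖ - ‖v₀‖ ≤ ‖v - v₀‖ := norm_sub_norm_le _ _
  have h4' : ‖v - v₀‖ < 5 * r := by simpa using h4
  have hv0 : (0:ℝ) ≤ ‖v₀‖ := norm_nonneg _
  refine ⟨?_, by linarith, ?_, by linarith⟩
  · rcases le_total (-t₀) (12 * r ^ 2) with hc | hc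
    · have hse : s = -t₀ := min_eq_left hc
      rw [hse] at h1
      nlinarith [h1]
    · have hse : s = 12 * r ^ 2 := min_eq_right hc
      rw [hse] at h1
      nlinarith [h1]
  · have heq : x - (x₀ + 0 + s • v₀) - (t - (t₀ + s)) • (v₀ + 0)
        = x - x₀ - (t - t₀) • v₀ := by
      rw [add_zero, add_zero, show t - (t₀ + s) = (t - t₀) - s by ring, sub_smul]
      abel
    rw [heq] at h3
    have habs : |t - t₀| ≤ 25 * r ^ 2 := by
      rw [abs_le]
      constructor <;> nlinarith [h1, h2]
    have hxd : x = (x - x₀ - (t - t₀) • v₀) + x₀ + (t - t₀) • v₀ := by abel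
    have hxle : ‖x‖ ≤ ‖x - x₀ - (t - t₀) • v₀‖ + ‖x₀‖ + |t - t₀| * ‖v₀‖ := by
      calc ‖x‖ = ‖(x - x₀ - (t - t₀) • v₀) + x₀ + (t - t₀) • v₀‖ := by rw [← hxd]
        _ ≤ ‖(x - x₀ - (t - t₀) • v₀) + x₀‖ + ‖(t - t₀) • v₀‖ := norm_add_le _ _
        _ ≤ ‖x - x₀ - (t - t₀) • v₀‖ + ‖x₀‖ + ‖(t - t₀) • v₀‖ := by
              gcongr; exact norm_add_le _ _
        _ = _ := by rw [norm_smul, Real.norm_eq_abs]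
    have hmul : |t - t₀| * ‖v₀‖ ≤ (25 * r ^ 2) * (γ - 5 * r) :=
      mul_le_mul habs (by linarith) hv0 (by positivity)
    nlinarith [h3, hxle, hmul]
end

section
/- Let 𝓰, 𝓱 : [1,∞) → [0,∞) be nonincreasing right-continuous functions tending to 0 at infinity, and let q > 1 and a > 1. Assume that for all t ≥ 1 one has −∫_t^∞ s^{q−1} d𝓰(s) ≤ a t^{q−1} 𝓰(t) − a ∫_t^∞ s^{q−1} d𝓱(s) (Stieltjes integrals). Then for all p ∈ [q, q + (q−1)/(a−1)) with a(p−q) < p−1, −∫_1^∞ t^{p−1} d𝓰(t) ≤ ((p−1)−(p−q))/((p−1)−a(p−q)) · (−∫_1^∞ t^{q−1} d𝓰(t)) + (2a(p−1))/((p−1)−a(p−q)) · (−∫_1^∞ t^{p−1} d𝓱(t)). -/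
open MeasureTheory Set Filter
open scoped ENNReal

/-!
Write `T_r(s) = ∫_{(s,∞)} t^(r-1) dμ` (`tailMoment μ r s`). The layer-cake formula gives
`T_p(1) = T_q(1) + (p-q) ∫_1^∞ s^(p-q-1) T_q(s) ds`, and for `μG`, whose tails are
`μG (s,∞) = G s`, the case `q = 1` reads `T_p(1) = G 1 + (p-1) ∫_1^∞ s^(p-2) G s ds`.
Integrating the level-set inequality against `(p-q) s^(p-q-1) ds`, and adding `p-q` times its
value at `t = 1`, gives, with `T^G`, `T^H` the moments of `μG`, `μH`,
`(p-1) T^G_p(1) ≤ (q-1) T^G_q(1) + a(p-q) T^G_p(1) + a(p-1) T^H_p(1)`. As `T^G_p(1)` is finite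
and `a(p-q) < p-1`, the middle term is absorbed into the left-hand side.
-/

theorem continuousOn_const_mul_rpow_Ici_one (b c : ℝ) :
    ContinuousOn (fun s : ℝ => b * s ^ c) (Ici 1) :=
  continuousOn_const.mul (continuousOn_id.rpow_const fun _ hs =>
    Or.inl (zero_lt_one.trans_le hs).ne')

theorem intervalIntegrable_indicator_Ioi_one_rpow (b c u v : ℝ) :
    IntervalIntegrable ((Ioi 1).indicator fun s => b * s ^ c) volume u v := by
  rw [intervalIntegrable_iff, integrableOn_indicator_iff measurableSet_Ioi]
  refine ((continuousOn_const_mul_rpow_Ici_one b c).mono Icc_subset_Ici_self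
    |>.integrableOn_Icc (b := max u v)).mono_set fun s hs => ⟨le_of_lt hs.1, ?_⟩
  exact hs.2.2.trans (max_le (le_max_left _ _) (le_max_right _ _))

theorem integral_indicator_Ioi_one_rpow {b t : ℝ} (ht : 1 ≤ t) :
    ∫ s in (0 : ℝ)..t, (Ioi 1).indicator (fun s => b * s ^ (b - 1)) s = t ^ b - 1 := by
  have hzero : ∫ s in (0 : ℝ)..1, (Ioi 1).indicator (fun s => b * s ^ (b - 1)) s = 0 := by
    rw [intervalIntegral.integral_congr (g := fun _ => (0 : ℝ)) fun s hs => ?_]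
    · simp
    rw [uIcc_of_le zero_le_one] at hs
    exact indicator_of_notMem (not_lt.2 hs.2) _
  have hone : ∫ s in (1 : ℝ)..t, (Ioi 1).indicator (fun s => b * s ^ (b - 1)) s
      = ∫ s in (1 : ℝ)..t, b * s ^ (b - 1) := by
    refine intervalIntegral.integral_congr_ae (ae_of_all _ fun s hs => ?_)
    rw [uIoc_of_le ht] at hs
    exact indicator_of_mem hs.1 _
  rw [← intervalIntegral.integral_add_adjacent_intervals
      (intervalIntegrable_indicator_Ioi_one_rpow _ _ _ _)
      (intervalIntegrable_indicator_Ioi_one_rpow _ _ _ _), hzero, hone, zero_add,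
    intervalIntegral.integral_eq_sub_of_hasDerivAt (f := fun s => s ^ b), Real.one_rpow]
  · intro s hs
    rw [uIcc_of_le ht] at hs
    exact Real.hasDerivAt_rpow_const (Or.inl (zero_lt_one.trans_le hs.1).ne')
  · exact ((continuousOn_const_mul_rpow_Ici_one b (b - 1)).mono
      (by rw [uIcc_of_le ht]; exact Icc_subset_Ici_self)).intervalIntegrable

theorem lintegral_Ioi_one_rpow_mul_rpow_sub_one (μ : Measure ℝ) {b : ℝ} (hb : 0 ≤ b)
    (c : ℝ) :
    ∫⁻ t in Ioi 1, ENNReal.ofReal (t ^ c) * ENNReal.ofReal (t ^ b - 1) ∂μ =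
      ∫⁻ s in Ioi 1, ENNReal.ofReal (b * s ^ (b - 1)) *
        ∫⁻ t in Ioi s, ENNReal.ofReal (t ^ c) ∂μ := by
  -- layer cake for the identity under the measure `t^c dμ` on `(1,∞)`
  have hν_nonneg : 0 ≤ᵐ[(μ.restrict (Ioi 1)).withDensity fun t => ENNReal.ofReal (t ^ c)]
      fun t => t :=
    (withDensity_absolutelyContinuous _ _).ae_le <|
      ae_restrict_of_forall_mem measurableSet_Ioi fun t ht => zero_le_one.trans (le_of_lt ht)
  have hg_nonneg : 0 ≤ (Ioi 1).indicator fun s : ℝ => b * s ^ (b - 1) :=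
    indicator_nonneg fun s hs =>
      mul_nonneg hb (Real.rpow_nonneg (zero_le_one.trans (le_of_lt hs)) _)
  have hcake := lintegral_comp_eq_lintegral_meas_lt_mul _ hν_nonneg measurable_id.aemeasurable
    (fun t _ => intervalIntegrable_indicator_Ioi_one_rpow b (b - 1) 0 t) (ae_of_all _ hg_nonneg)
  rw [lintegral_withDensity_eq_lintegral_mul_non_measurable _
      (by fun_prop) (ae_of_all _ fun _ => ENNReal.ofReal_lt_top),
    setLIntegral_congr_fun measurableSet_Ioi fun t ht => by
      rw [Pi.mul_apply, integral_indicator_Ioi_one_rpow (le_of_lt ht)]] at hcake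
  have hrhs : ∀ s, ((μ.restrict (Ioi 1)).withDensity fun t => ENNReal.ofReal (t ^ c)) (Ioi s)
      * ENNReal.ofReal ((Ioi 1).indicator (fun s => b * s ^ (b - 1)) s) =
      (Ioi 1).indicator (fun s => ENNReal.ofReal (b * s ^ (b - 1)) *
        ∫⁻ t in Ioi s, ENNReal.ofReal (t ^ c) ∂μ) s := by
    intro s
    by_cases hs : s ∈ Ioi 1
    · rw [indicator_of_mem hs, indicator_of_mem hs, mul_comm,
        withDensity_apply _ measurableSet_Ioi, Measure.restrict_restrict measurableSet_Ioi,
        inter_eq_self_of_subset_left (Ioi_subset_Ioi (le_of_lt hs))]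
    · simp [indicator_of_notMem hs]
  rw [hcake]
  refine (lintegral_congr hrhs).trans ?_
  rw [lintegral_indicator measurableSet_Ioi,
    Measure.restrict_restrict measurableSet_Ioi,
    inter_eq_self_of_subset_left (Ioi_subset_Ioi zero_le_one)]

theorem measure_Ioi_eq_ofReal_of_measure_Ioc {μ : Measure ℝ} {F : ℝ → ℝ} {x₀ : ℝ}
    (hμ : ∀ s t : ℝ, x₀ ≤ s → s ≤ t → μ (Ioc s t) = ENNReal.ofReal (F s - F t))
    (hF : Tendsto F atTop (nhds 0)) {s : ℝ} (hs : x₀ ≤ s) :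
    μ (Ioi s) = ENNReal.ofReal (F s) := by
  have hunion : Tendsto (fun t => μ (Ioc s t)) atTop (nhds (μ (Ioi s))) := by
    rw [← iUnion_Ioc_right]
    exact tendsto_measure_iUnion_atTop (antitone_const.Ioc monotone_id)
  have hF' : Tendsto (fun t => μ (Ioc s t)) atTop (nhds (ENNReal.ofReal (F s))) := by
    refine Tendsto.congr' (eventually_ge_atTop s |>.mono fun t ht => (hμ s t hs ht).symm) ?_
    simpa using ENNReal.tendsto_ofReal (tendsto_const_nhds.sub hF)
  exact tendsto_nhds_unique hunion hF'

noncomputable def tailMoment (μ : Measure ℝ) (r s : ℝ) : ℝ≥0∞ :=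
  ∫⁻ t in Ioi s, ENNReal.ofReal (t ^ (r - 1)) ∂μ

theorem tailMoment_antitone (μ : Measure ℝ) (r : ℝ) : Antitone (tailMoment μ r) :=
  fun _ _ hss' => lintegral_mono_set (Ioi_subset_Ioi hss')

theorem tailMoment_one_eq_add (μ : Measure ℝ) {p q : ℝ} (hqp : q ≤ p) :
    tailMoment μ p 1 = tailMoment μ q 1 +
      ∫⁻ s in Ioi 1, ENNReal.ofReal ((p - q) * s ^ (p - q - 1)) * tailMoment μ q s := by
  simp only [tailMoment]
  rw [← lintegral_Ioi_one_rpow_mul_rpow_sub_one μ (sub_nonneg.2 hqp),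
    ← lintegral_add_left (by fun_prop)]
  refine setLIntegral_congr_fun measurableSet_Ioi fun t ht => ?_
  have ht₀ : 0 < t := zero_lt_one.trans ht
  have hsplit : t ^ (p - 1) = t ^ (q - 1) + t ^ (q - 1) * (t ^ (p - q) - 1) := by
    rw [mul_sub, mul_one, ← Real.rpow_add ht₀]
    ring_nf
  have hpow : 0 ≤ t ^ (p - q) - 1 :=
    sub_nonneg.2 (Real.one_le_rpow (le_of_lt ht) (sub_nonneg.2 hqp))
  rw [hsplit, ENNReal.ofReal_add (by positivity) (by positivity),
    ENNReal.ofReal_mul (by positivity)]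

theorem tailMoment_one_eq_ofReal_add {μ : Measure ℝ} {F : ℝ → ℝ}
    (hμ : ∀ s t : ℝ, 1 ≤ s → s ≤ t → μ (Ioc s t) = ENNReal.ofReal (F s - F t))
    (hF : Tendsto F atTop (nhds 0)) {p : ℝ} (hp : 1 ≤ p) :
    tailMoment μ p 1 =
      ENNReal.ofReal (F 1) +
        ENNReal.ofReal (p - 1) * ∫⁻ s in Ioi 1, ENNReal.ofReal (s ^ (p - 2) * F s) := by
  have hF_tail : ∀ s : ℝ, 1 ≤ s → tailMoment μ 1 s = ENNReal.ofReal (F s) := by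
    intro s hs
    simp [tailMoment, measure_Ioi_eq_ofReal_of_measure_Ioc hμ hF hs]
  rw [tailMoment_one_eq_add μ hp, hF_tail 1 le_rfl,
    ← lintegral_const_mul' _ _ ENNReal.ofReal_ne_top]
  congr 1
  refine setLIntegral_congr_fun measurableSet_Ioi fun s hs => ?_
  rw [hF_tail s (le_of_lt hs), ENNReal.ofReal_mul (sub_nonneg.2 hp),
    ENNReal.ofReal_mul (Real.rpow_nonneg (zero_le_one.trans (le_of_lt hs)) _),
    show p - 1 - 1 = p - 2 by ring, mul_assoc]

theorem lintegral_mul_tailMoment_le {μ ν : Measure ℝ} {F : ℝ → ℝ} {a p q : ℝ}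
    (ha : 0 ≤ a) (hqp : q ≤ p)
    (h : ∀ t : ℝ, 1 ≤ t → tailMoment μ q t ≤
      ENNReal.ofReal (a * t ^ (q - 1) * F t) + ENNReal.ofReal a * tailMoment ν q t) :
    ∫⁻ s in Ioi 1, ENNReal.ofReal ((p - q) * s ^ (p - q - 1)) * tailMoment μ q s ≤
      ENNReal.ofReal (a * (p - q)) * (∫⁻ s in Ioi 1, ENNReal.ofReal (s ^ (p - 2) * F s)) +
        ENNReal.ofReal a *
          ∫⁻ s in Ioi 1, ENNReal.ofReal ((p - q) * s ^ (p - q - 1)) * tailMoment ν q s := by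
  have hmeas := (tailMoment_antitone ν q).measurable
  rw [← lintegral_const_mul' (ENNReal.ofReal (a * (p - q))) _ ENNReal.ofReal_ne_top,
    ← lintegral_const_mul' (ENNReal.ofReal a) _ ENNReal.ofReal_ne_top,
    ← lintegral_add_right _ (by fun_prop)]
  refine setLIntegral_mono' measurableSet_Ioi fun s hs => ?_
  have hs₀ : 0 < s := zero_lt_one.trans hs
  have hweight : 0 ≤ (p - q) * s ^ (p - q - 1) := mul_nonneg (sub_nonneg.2 hqp) (by positivity)
  calc _ ≤ ENNReal.ofReal ((p - q) * s ^ (p - q - 1)) *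
        (ENNReal.ofReal (a * s ^ (q - 1) * F s) + ENNReal.ofReal a * tailMoment ν q s) := by
        gcongr; exact h s (le_of_lt hs)
    _ = _ := by
      rw [mul_add, mul_left_comm _ (ENNReal.ofReal a), ← ENNReal.ofReal_mul hweight,
        ← ENNReal.ofReal_mul (mul_nonneg ha (sub_nonneg.2 hqp))]
      have hexp : s ^ (p - q - 1) * s ^ (q - 1) = s ^ (p - 2) := by
        rw [← Real.rpow_add hs₀]; ring_nf
      congr 2
      linear_combination a * (p - q) * F s * hexp

theorem ENNReal.mul_le_of_layer_cake_bounds {X Y Z W K L G₁ J a b p q : ℝ≥0∞}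
    (hp : p = q + b) (hbp : b ≤ p) (hX : X = Y + K) (hX' : X = G₁ + p * J) (hZ : Z = W + L)
    (hY : Y ≤ a * (G₁ + W)) (hK : K ≤ a * b * J + a * L) :
    p * X ≤ q * Y + a * b * X + a * p * Z :=
  calc p * X = q * Y + (b * Y + p * K) := by rw [hp, hX]; ring
    _ ≤ q * Y + (b * (a * (G₁ + W)) + p * (a * b * J + a * L)) := by gcongr
    _ = q * Y + a * b * (G₁ + p * J) + a * (b * W + p * L) := by ring
    _ ≤ q * Y + a * b * X + a * (p * W + p * L) := by rw [← hX']; gcongr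
    _ = q * Y + a * b * X + a * p * Z := by rw [hZ]; ring

theorem ENNReal.le_ofReal_div_mul_add_of_mul_le {X Y Z : ℝ≥0∞} {c d α β : ℝ}
    (hX : X ≠ ⊤) (hc : 0 ≤ c) (hcd : c < d)
    (h : ENNReal.ofReal d * X ≤
      ENNReal.ofReal α * Y + ENNReal.ofReal c * X + ENNReal.ofReal β * Z) :
    X ≤ ENNReal.ofReal (α / (d - c)) * Y + ENNReal.ofReal (β / (d - c)) * Z := by
  have hdc : 0 < d - c := sub_pos.2 hcd
  have hsplit : ENNReal.ofReal d = ENNReal.ofReal (d - c) + ENNReal.ofReal c := by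
    rw [← ENNReal.ofReal_add hdc.le hc, sub_add_cancel]
  have hcancel : ENNReal.ofReal (d - c) * X ≤ ENNReal.ofReal α * Y + ENNReal.ofReal β * Z := by
    refine ENNReal.le_of_add_le_add_right
      (ENNReal.mul_ne_top (ENNReal.ofReal_ne_top (r := c)) hX) ?_
    calc _ = ENNReal.ofReal d * X := by rw [hsplit, add_mul]
      _ ≤ _ := h
      _ = _ := by ring
  rw [ENNReal.ofReal_div_of_pos hdc, ENNReal.ofReal_div_of_pos hdc, ← ENNReal.mul_div_right_comm,
    ← ENNReal.mul_div_right_comm, ENNReal.div_add_div_same,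
    ENNReal.le_div_iff_mul_le (Or.inl (ENNReal.ofReal_pos.2 hdc).ne')
      (Or.inl ENNReal.ofReal_ne_top),
    mul_comm]
  exact hcancel

theorem stmt6_general (G : ℝ → ℝ) (q a : ℝ) (hq : 1 < q) (ha : 1 < a)
    (hGlim : Tendsto G atTop (nhds 0))
    -- `μG` and `μH` are the Lebesgue–Stieltjes measures of `-G` and `-H`,
    -- so that `∫ f ∂μG = -∫ f dG` as a Stieltjes integral.
    (μG μH : Measure ℝ)
    (hμG : ∀ s t : ℝ, 1 ≤ s → s ≤ t → μG (Ioc s t) = ENNReal.ofReal (G s - G t))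
    -- the reverse Hölder inequality on level sets
    (hmain : ∀ t : ℝ, 1 ≤ t →
      ∫⁻ s in Ioi t, ENNReal.ofReal (s ^ (q - 1)) ∂μG ≤
        ENNReal.ofReal (a * t ^ (q - 1) * G t) +
          ENNReal.ofReal a * ∫⁻ s in Ioi t, ENNReal.ofReal (s ^ (q - 1)) ∂μH)
    (p : ℝ) (hpq : q ≤ p) (hpa : a * (p - q) < p - 1)
    (hGfin : ∫⁻ t in Ioi 1, ENNReal.ofReal (t ^ (p - 1)) ∂μG ≠ ⊤) :
    ∫⁻ t in Ioi 1, ENNReal.ofReal (t ^ (p - 1)) ∂μG ≤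
      ENNReal.ofReal (((p - 1) - (p - q)) / ((p - 1) - a * (p - q))) *
          ∫⁻ t in Ioi 1, ENNReal.ofReal (t ^ (q - 1)) ∂μG +
        ENNReal.ofReal (2 * a * (p - 1) / ((p - 1) - a * (p - q))) *
          ∫⁻ t in Ioi 1, ENNReal.ofReal (t ^ (p - 1)) ∂μH := by
  have ha₀ : 0 ≤ a := by linarith
  have hp : 1 ≤ p := by linarith
  have hmain_one := hmain 1 le_rfl
  rw [Real.one_rpow, mul_one, ENNReal.ofReal_mul ha₀, ← mul_add] at hmain_one
  have hweighted := lintegral_mul_tailMoment_le ha₀ hpq hmain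
  rw [ENNReal.ofReal_mul ha₀] at hweighted
  have hcore := ENNReal.mul_le_of_layer_cake_bounds (q := ENNReal.ofReal (q - 1))
    (by rw [← ENNReal.ofReal_add (by linarith) (by linarith)]; ring_nf)
    (ENNReal.ofReal_le_ofReal (by linarith : p - q ≤ p - 1))
    (tailMoment_one_eq_add μG hpq) (tailMoment_one_eq_ofReal_add hμG hGlim hp)
    (tailMoment_one_eq_add μH hpq) hmain_one hweighted
  rw [← ENNReal.ofReal_mul ha₀, ← ENNReal.ofReal_mul ha₀] at hcore
  unfold tailMoment at hcore
  calc _ ≤ _ := ENNReal.le_ofReal_div_mul_add_of_mul_le hGfin (by positivity) hpa hcore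
    _ ≤ _ := by
      rw [show (p - 1) - (p - q) = q - 1 by ring]
      gcongr
      linarith

theorem stmt6 (G H : ℝ → ℝ) (q a : ℝ) (hq : 1 < q) (ha : 1 < a)
    (hGpos : ∀ t, 1 ≤ t → 0 ≤ G t) (hHpos : ∀ t, 1 ≤ t → 0 ≤ H t)
    (hGanti : AntitoneOn G (Ici 1)) (hHanti : AntitoneOn H (Ici 1))
    (hGrc : ∀ t, 1 ≤ t → ContinuousWithinAt G (Ici t) t)
    (hHrc : ∀ t, 1 ≤ t → ContinuousWithinAt H (Ici t) t)
    (hGlim : Tendsto G atTop (nhds 0)) (hHlim : Tendsto H atTop (nhds 0))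
    -- `μG` and `μH` are the Lebesgue–Stieltjes measures of `-G` and `-H`,
    -- so that `∫ f ∂μG = -∫ f dG` as a Stieltjes integral.
    (μG μH : Measure ℝ)
    (hμG : ∀ s t : ℝ, 1 ≤ s → s ≤ t → μG (Ioc s t) = ENNReal.ofReal (G s - G t))
    (hμH : ∀ s t : ℝ, 1 ≤ s → s ≤ t → μH (Ioc s t) = ENNReal.ofReal (H s - H t))
    -- the reverse Hölder inequality on level sets
    (hmain : ∀ t : ℝ, 1 ≤ t →
      ∫⁻ s in Ioi t, ENNReal.ofReal (s ^ (q - 1)) ∂μG ≤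
        ENNReal.ofReal (a * t ^ (q - 1) * G t) +
          ENNReal.ofReal a * ∫⁻ s in Ioi t, ENNReal.ofReal (s ^ (q - 1)) ∂μH)
    (p : ℝ) (hpq : q ≤ p) (hpa : a * (p - q) < p - 1)
    (hGfin : ∫⁻ t in Ioi 1, ENNReal.ofReal (t ^ (p - 1)) ∂μG ≠ ⊤)
    (hHfin : ∫⁻ t in Ioi 1, ENNReal.ofReal (t ^ (p - 1)) ∂μH ≠ ⊤) :
    ∫⁻ t in Ioi 1, ENNReal.ofReal (t ^ (p - 1)) ∂μG ≤
      ENNReal.ofReal (((p - 1) - (p - q)) / ((p - 1) - a * (p - q))) *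
          ∫⁻ t in Ioi 1, ENNReal.ofReal (t ^ (q - 1)) ∂μG +
        ENNReal.ofReal (2 * a * (p - 1) / ((p - 1) - a * (p - q))) *
          ∫⁻ t in Ioi 1, ENNReal.ofReal (t ^ (p - 1)) ∂μH :=
  stmt6_general G q a hq ha hGlim μG μH hμG hmain p hpq hpa hGfin
end

section
/- Let γ > 1, q > 1, and let 𝐠 : ℝ^{2d+1} → [0,∞) be measurable with 𝐠 supported in Q_γ and 𝐠 ∈ L^q. Suppose: (a) for every z₀ ∈ Q_γ and every r > (2/3)ζ(z₀) with Q_r(z₀) ⊆ Q_γ one has ⨍_{Q_r(z₀)} 𝐠^q ≤ 1, where ζ is the localization function of Q_γ. Fix s > 1 and let 𝒢 be the union of all kinetic cylinders Q_r(z₀) ⊆ Q_γ with z₀ ∈ Q_γ, r ≤ ζ(z₀), satisfying ⨍_{5Q_r(z₀)} 𝐠^q < s^q ≤ ⨍_{Q_r(z₀)} 𝐠^q. Then the superlevel set {𝐠 > s} ∩ Q_γ is contained in 𝒢 up to a Lebesgue-null set. -/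
open MeasureTheory Set Filter
open scoped ENNReal Topology

/-- The average of a nonnegative function over a set. -/
noncomputable def kAvg {d : ℕ}
    (S : Set (ℝ × EuclideanSpace ℝ (Fin d) × EuclideanSpace ℝ (Fin d)))
    (F : ℝ × EuclideanSpace ℝ (Fin d) × EuclideanSpace ℝ (Fin d) → ℝ) : ℝ≥0∞ :=
  (∫⁻ z in S, ENNReal.ofReal (F z)) / volume S

/-! Fix `z ∈ Q_γ` with `𝐠 z > s` at which the Lebesgue differentiation theorem holds, and consider
the cylinders `Q_ρ(z ∘ (min (-t, ρ²/2), 0, 0))`, all of which contain `z`. At `ρ = (9/10) ζ(z)` the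
average of `𝐠^q` is at most `1 < s^q` by (a), while for small `ρ` it exceeds `s^q`. Descending along
`ρ = R / 5^k`, the first radius `r` at which it reaches `s^q` gives a selected cylinder: since the
time shifts add up, its enlargement `5Q_r` is the cylinder of this family of radius `5r`. A time
shift by at most `ζ²/2` changes `ζ²` by at most `ζ²/104`, which keeps all these cylinders inside
`Q_γ` with radius below `ζ` of their centre. -/

theorem min_add_min_sub_min {a b c : ℝ} (hc : 0 ≤ c) :
    min a b + min (a - min a b) c = min a (b + c) := by
  rcases le_total a b with h | h
  · rw [min_eq_left h, sub_self, min_eq_left hc, min_eq_left (by linarith)]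
    ring
  · rw [min_eq_right h, ← min_add_add_left]
    ring_nf

theorem exists_stopping_radius {P : ℝ → Prop} {R κ : ℝ} (hR : 0 < R) (hκ : 1 < κ)
    (hPR : ¬ P R) (hP : ∀ᶠ r in 𝓝[>] 0, P r) :
    ∃ r, 0 < r ∧ r ≤ R ∧ P r ∧ ¬ P (κ * r) := by
  classical
  have hκ0 : 0 < κ := by linarith
  have hlim : Tendsto (fun n : ℕ => R / κ ^ n) atTop (𝓝[>] 0) :=
    tendsto_nhdsWithin_iff.2 ⟨tendsto_const_nhds.div_atTop (tendsto_pow_atTop_atTop_of_one_lt hκ),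
      Eventually.of_forall fun n => show 0 < R / κ ^ n by positivity⟩
  have hex : ∃ n, P (R / κ ^ n) := (hlim.eventually hP).exists
  have hm : Nat.find hex ≠ 0 := fun h => hPR (by simpa [h] using Nat.find_spec hex)
  obtain ⟨k, hk⟩ := Nat.exists_eq_succ_of_ne_zero hm
  refine ⟨R / κ ^ Nat.find hex, by positivity, div_le_self hR.le (one_le_pow₀ hκ.le),
    Nat.find_spec hex, ?_⟩
  have hκr : κ * (R / κ ^ Nat.find hex) = R / κ ^ k := by
    rw [hk, pow_succ]; field_simp
  exact hκr ▸ Nat.find_min hex (by omega)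

section KineticCylinders

variable {d : ℕ}

local notation "PhaseSpace" => ℝ × EuclideanSpace ℝ (Fin d) × EuclideanSpace ℝ (Fin d)

@[simp]
theorem kMul_time (z : PhaseSpace) (σ : ℝ) :
    kMul z ((σ, 0, 0) : PhaseSpace) = (z.1 + σ, z.2.1 + σ • z.2.2, z.2.2) := by
  simp [kMul]

theorem kMul_time_time (z : PhaseSpace) (σ τ : ℝ) :
    kMul (kMul z ((σ, 0, 0) : PhaseSpace)) ((τ, 0, 0) : PhaseSpace) =
      kMul z ((σ + τ, 0, 0) : PhaseSpace) := by
  simp [add_smul, add_assoc]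

theorem mem_kCyl_zero {γ : ℝ} {z : PhaseSpace} :
    z ∈ kCyl γ ((0, 0, 0) : PhaseSpace) ↔
      -γ ^ 2 < z.1 ∧ z.1 ≤ 0 ∧ ‖z.2.1‖ < γ ^ 3 ∧ ‖z.2.2‖ < γ := by
  simp [kCyl]

theorem mem_kCyl_kMul_time {z : PhaseSpace} {r σ : ℝ} (hr : 0 < r) (hσ : 0 ≤ σ)
    (hσr : σ < r ^ 2) : z ∈ kCyl r (kMul z ((σ, 0, 0) : PhaseSpace)) := by
  have hx : z.2.1 - (z.2.1 + σ • z.2.2) - (z.1 - (z.1 + σ)) • z.2.2 = 0 := by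
    rw [show z.1 - (z.1 + σ) = -σ by ring, neg_smul]; abel
  simp only [kCyl, kMul_time, mem_ofPred_eq, hx, sub_self, norm_zero]
  exact ⟨by linarith, by linarith, by positivity, hr⟩

theorem kCyl5_kMul_time (z : PhaseSpace) (r : ℝ) :
    kCyl5 r (kMul z ((min (-z.1) (r ^ 2 / 2), 0, 0) : PhaseSpace)) =
      kCyl (5 * r) (kMul z ((min (-z.1) ((5 * r) ^ 2 / 2), 0, 0) : PhaseSpace)) := by
  have hσ : min (-z.1) (r ^ 2 / 2) + min (-z.1 - min (-z.1) (r ^ 2 / 2)) (12 * r ^ 2) =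
      min (-z.1) ((5 * r) ^ 2 / 2) := by
    rw [min_add_min_sub_min (by positivity)]; ring_nf
  rw [kCyl5, kMul_time_time, ← hσ]
  simp only [kMul_time, neg_add]
  ring_nf

/-- The square of `kZeta γ` (see `kZeta_sq`), written without square roots. -/
noncomputable def kZetaSq (γ : ℝ) (z : PhaseSpace) : ℝ :=
  min ((max (γ - ‖z.2.2‖) 0 / 5) ^ 2)
    (min (max (γ ^ 2 + z.1) 0 / 13) (max (γ ^ 3 - ‖z.2.1‖) 0 / (25 * γ))) / 4

theorem kZeta_eq_sqrt (γ : ℝ) (z : PhaseSpace) :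
    kZeta γ z = √(kZetaSq γ z) := by
  rw [kZetaSq, Real.sqrt_div' _ (by norm_num), show √(4 : ℝ) = 2 by
      rw [show (4 : ℝ) = 2 ^ 2 by norm_num, Real.sqrt_sq zero_le_two],
    Real.sqrt_monotone.map_min, Real.sqrt_monotone.map_min, Real.sqrt_sq (by positivity), kZeta]
  ring

theorem kZetaSq_nonneg {γ : ℝ} (hγ : 0 ≤ γ) (z : PhaseSpace) : 0 ≤ kZetaSq γ z := by
  unfold kZetaSq; positivity

theorem kZeta_sq {γ : ℝ} (hγ : 0 ≤ γ) (z : PhaseSpace) : kZeta γ z ^ 2 = kZetaSq γ z := by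
  rw [kZeta_eq_sqrt, Real.sq_sqrt (kZetaSq_nonneg hγ z)]

theorem mem_kCyl_zero_iff_kZetaSq_pos {γ : ℝ} (hγ : 0 < γ) {z : PhaseSpace} :
    z ∈ kCyl γ ((0, 0, 0) : PhaseSpace) ↔ z.1 ≤ 0 ∧ 0 < kZetaSq γ z := by
  have hv : 0 < (max (γ - ‖z.2.2‖) 0 / 5) ^ 2 ↔ ‖z.2.2‖ < γ := by
    rw [sq_pos_iff, div_ne_zero_iff, ← (le_max_right _ _).lt_iff_ne', lt_max_iff]
    simp [sub_pos]
  simp only [mem_kCyl_zero, kZetaSq, div_pos_iff_of_pos_right (by norm_num : (0 : ℝ) < 4),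
    lt_min_iff, div_pos_iff_of_pos_right (by positivity : (0 : ℝ) < 25 * γ),
    div_pos_iff_of_pos_right (by norm_num : (0 : ℝ) < 13), lt_max_iff, lt_irrefl, or_false, hv,
    sub_pos, ← neg_lt_iff_pos_add']
  tauto

theorem abs_kZetaSq_kMul_time_sub_le {γ σ : ℝ} (hγ : 0 < γ) {z : PhaseSpace}
    (hv : ‖z.2.2‖ ≤ γ) (hσ : 0 ≤ σ) :
    |kZetaSq γ (kMul z ((σ, 0, 0) : PhaseSpace)) - kZetaSq γ z| ≤ σ / 52 := by
  have ht : |max (γ ^ 2 + (z.1 + σ)) 0 / 13 - max (γ ^ 2 + z.1) 0 / 13| ≤ σ / 13 := by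
    rw [← sub_div, abs_div, abs_of_pos (by norm_num : (0 : ℝ) < 13)]
    gcongr
    calc _ ≤ |γ ^ 2 + (z.1 + σ) - (γ ^ 2 + z.1)| := abs_max_sub_max_le_abs _ _ _
      _ = σ := by rw [add_sub_add_left_eq_sub, add_sub_cancel_left, abs_of_nonneg hσ]
  have hx : |max (γ ^ 3 - ‖z.2.1 + σ • z.2.2‖) 0 / (25 * γ) -
      max (γ ^ 3 - ‖z.2.1‖) 0 / (25 * γ)| ≤ σ / 13 := by
    rw [← sub_div, abs_div, abs_of_pos (by positivity : 0 < 25 * γ)]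
    calc _ ≤ |‖z.2.1‖ - ‖z.2.1 + σ • z.2.2‖| / (25 * γ) := by
          refine div_le_div_of_nonneg_right ((abs_max_sub_max_le_abs _ _ _).trans_eq ?_)
            (by positivity)
          rw [sub_sub_sub_cancel_left]
      _ ≤ ‖σ • z.2.2‖ / (25 * γ) := by
          gcongr
          simpa [abs_sub_comm] using abs_norm_sub_norm_le (z.2.1 + σ • z.2.2) z.2.1
      _ ≤ σ * γ / (25 * γ) := by
          rw [norm_smul, Real.norm_of_nonneg hσ]; gcongr
      _ ≤ σ / 13 := by
          rw [mul_div_mul_right _ _ hγ.ne']; gcongr; norm_num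
  simp only [kZetaSq, kMul_time]
  rw [← sub_div, abs_div, abs_of_pos (by norm_num : (0 : ℝ) < 4)]
  calc _ ≤ max |(max (γ - ‖z.2.2‖) 0 / 5) ^ 2 - (max (γ - ‖z.2.2‖) 0 / 5) ^ 2|
        (max _ _) / 4 := by gcongr; exact abs_min_sub_min_le_max _ _ _ _
    _ ≤ σ / 13 / 4 := by
        gcongr
        rw [sub_self, abs_zero]
        exact max_le (by positivity) ((abs_min_sub_min_le_max _ _ _ _).trans (max_le ht hx))
    _ = σ / 52 := by ring

theorem kZeta_nonneg (γ : ℝ) (z : PhaseSpace) : 0 ≤ kZeta γ z :=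
  kZeta_eq_sqrt γ z ▸ Real.sqrt_nonneg _

theorem kZeta_pos {γ : ℝ} (hγ : 0 < γ) {z : PhaseSpace}
    (hz : z ∈ kCyl γ ((0, 0, 0) : PhaseSpace)) : 0 < kZeta γ z :=
  kZeta_eq_sqrt γ z ▸ Real.sqrt_pos.2 ((mem_kCyl_zero_iff_kZetaSq_pos hγ).1 hz).2

theorem kZeta_kMul_time_bounds {γ σ : ℝ} (hγ : 0 < γ) {z : PhaseSpace}
    (hz : z ∈ kCyl γ ((0, 0, 0) : PhaseSpace)) (hσ : 0 ≤ σ) (hσt : σ ≤ -z.1)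
    (hσζ : σ ≤ kZeta γ z ^ 2 / 2) :
    kMul z ((σ, 0, 0) : PhaseSpace) ∈ kCyl γ ((0, 0, 0) : PhaseSpace) ∧
      9 / 10 * kZeta γ z ≤ kZeta γ (kMul z ((σ, 0, 0) : PhaseSpace)) ∧
      kZeta γ (kMul z ((σ, 0, 0) : PhaseSpace)) ≤ 11 / 10 * kZeta γ z := by
  obtain ⟨-, hS⟩ := (mem_kCyl_zero_iff_kZetaSq_pos hγ).1 hz
  have hdiff := abs_le.1 <| abs_kZetaSq_kMul_time_sub_le hγ (mem_kCyl_zero.1 hz).2.2.2.le hσ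
  have hζ := kZeta_sq hγ.le z
  have hζ' := kZeta_sq hγ.le (kMul z ((σ, 0, 0) : PhaseSpace))
  have h0 := kZeta_nonneg γ z
  have h0' := kZeta_nonneg γ (kMul z ((σ, 0, 0) : PhaseSpace))
  refine ⟨(mem_kCyl_zero_iff_kZetaSq_pos hγ).2 ⟨?_, ?_⟩, ?_, ?_⟩
  · simp only [kMul_time]; linarith
  · linarith
  · refine (pow_le_pow_iff_left₀ (by positivity) h0' two_ne_zero).1 ?_
    rw [mul_pow, hζ, hζ']; linarith
  · refine (pow_le_pow_iff_left₀ h0' (by positivity) two_ne_zero).1 ?_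
    rw [mul_pow, hζ, hζ']; linarith

theorem kZeta_bounds {γ : ℝ} (hγ : 0 < γ) {z : PhaseSpace}
    (hz : z ∈ kCyl γ ((0, 0, 0) : PhaseSpace)) :
    10 * kZeta γ z ≤ γ - ‖z.2.2‖ ∧ 52 * kZeta γ z ^ 2 ≤ γ ^ 2 + z.1 ∧
      100 * γ * kZeta γ z ^ 2 ≤ γ ^ 3 - ‖z.2.1‖ := by
  obtain ⟨ht, -, hx, hv⟩ := mem_kCyl_zero.1 hz
  have hM : (2 * kZeta γ z) ^ 2 = min (((γ - ‖z.2.2‖) / 5) ^ 2)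
      (min ((γ ^ 2 + z.1) / 13) ((γ ^ 3 - ‖z.2.1‖) / (25 * γ))) := by
    rw [mul_pow, kZeta_sq hγ.le, kZetaSq, max_eq_left (by linarith), max_eq_left (by linarith),
      max_eq_left (by linarith)]
    ring
  have hζv : 2 * kZeta γ z ≤ (γ - ‖z.2.2‖) / 5 :=
    (pow_le_pow_iff_left₀ (mul_nonneg zero_le_two (kZeta_nonneg γ z)) (by linarith)
      two_ne_zero).1 (hM ▸ min_le_left _ _)
  have hζt : (2 * kZeta γ z) ^ 2 ≤ (γ ^ 2 + z.1) / 13 :=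
    hM ▸ (min_le_right _ _).trans (min_le_left _ _)
  have hζx : (2 * kZeta γ z) ^ 2 ≤ (γ ^ 3 - ‖z.2.1‖) / (25 * γ) :=
    hM ▸ (min_le_right _ _).trans (min_le_right _ _)
  rw [le_div_iff₀ (by positivity)] at hζt hζx
  exact ⟨by linarith, by linarith, by linarith⟩

theorem kCyl_subset_kCyl_zero {γ ρ : ℝ} (hγ : 0 < γ) {z₀ : PhaseSpace}
    (hz₀ : z₀ ∈ kCyl γ ((0, 0, 0) : PhaseSpace)) (hρ : 0 < ρ) (hρζ : ρ ≤ kZeta γ z₀) :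
    kCyl ρ z₀ ⊆ kCyl γ ((0, 0, 0) : PhaseSpace) := by
  obtain ⟨hζv, hζt, hζx⟩ := kZeta_bounds hγ hz₀
  obtain ⟨-, ht₀, -, hv₀⟩ := mem_kCyl_zero.1 hz₀
  have hρ2 : ρ ^ 2 ≤ kZeta γ z₀ ^ 2 := pow_le_pow_left₀ hρ.le hρζ 2
  rintro w ⟨ht, ht', hx, hv⟩
  refine mem_kCyl_zero.2 ⟨by nlinarith, by linarith, ?_, ?_⟩
  · have hdrift : ‖(w.1 - z₀.1) • z₀.2.2‖ ≤ ρ ^ 2 * γ := by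
      rw [norm_smul, Real.norm_eq_abs]
      exact mul_le_mul (abs_le.2 ⟨by linarith, by linarith⟩) hv₀.le (norm_nonneg _)
        (by positivity)
    have hρ3 : ρ ^ 3 ≤ ρ ^ 2 * γ := by nlinarith [norm_nonneg z₀.2.2]
    calc ‖w.2.1‖ = ‖z₀.2.1 + (w.2.1 - z₀.2.1 - (w.1 - z₀.1) • z₀.2.2)
          + (w.1 - z₀.1) • z₀.2.2‖ := by congr 1; abel
      _ ≤ ‖z₀.2.1‖ + ‖w.2.1 - z₀.2.1 - (w.1 - z₀.1) • z₀.2.2‖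
          + ‖(w.1 - z₀.1) • z₀.2.2‖ := norm_add₃_le
      _ < γ ^ 3 := by nlinarith
  · linarith [norm_sub_norm_le w.2.2 z₀.2.2]

theorem exists_stopping_kCyl {γ : ℝ} (hγ : 0 < γ) (A : Set PhaseSpace → ℝ≥0∞)
    (hnorm : ∀ z₀ ∈ kCyl γ ((0, 0, 0) : PhaseSpace), ∀ r : ℝ, 0 < r →
      2 / 3 * kZeta γ z₀ < r → kCyl r z₀ ⊆ kCyl γ (0, 0, 0) → A (kCyl r z₀) ≤ 1)
    {c : ℝ≥0∞} (hc : 1 < c) {z : PhaseSpace} (hz : z ∈ kCyl γ ((0, 0, 0) : PhaseSpace))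
    (hsmall : ∀ᶠ r in 𝓝[>] 0, c ≤ A (kCyl r (kMul z (min (-z.1) (r ^ 2 / 2), 0, 0)))) :
    ∃ z₀ ∈ kCyl γ ((0, 0, 0) : PhaseSpace), ∃ r : ℝ, 0 < r ∧ r ≤ kZeta γ z₀ ∧
      kCyl r z₀ ⊆ kCyl γ (0, 0, 0) ∧ A (kCyl5 r z₀) < c ∧ c ≤ A (kCyl r z₀) ∧
      z ∈ kCyl r z₀ := by
  set ζ := kZeta γ z
  have hζ : 0 < ζ := kZeta_pos hγ hz
  have ht : z.1 ≤ 0 := (mem_kCyl_zero.1 hz).2.1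
  have hcenter : ∀ ρ, 0 < ρ → ρ ≤ ζ →
      kMul z ((min (-z.1) (ρ ^ 2 / 2), 0, 0) : PhaseSpace) ∈ kCyl γ (0, 0, 0) ∧
      9 / 10 * ζ ≤ kZeta γ (kMul z (min (-z.1) (ρ ^ 2 / 2), 0, 0)) ∧
      kZeta γ (kMul z (min (-z.1) (ρ ^ 2 / 2), 0, 0)) ≤ 11 / 10 * ζ := fun ρ hρ hρζ =>
    kZeta_kMul_time_bounds hγ hz (le_min (by linarith) (by positivity)) (min_le_left _ _)
      ((min_le_right _ _).trans (by gcongr))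
  obtain ⟨hR, hRlow, hRup⟩ := hcenter (9 / 10 * ζ) (by positivity) (by linarith)
  have hAR : A (kCyl (9 / 10 * ζ) (kMul z (min (-z.1) ((9 / 10 * ζ) ^ 2 / 2), 0, 0))) ≤ 1 :=
    hnorm _ hR _ (by positivity) (by linarith) (kCyl_subset_kCyl_zero hγ hR (by positivity) hRlow)
  obtain ⟨r, hr, hrR, hcr, hc5r⟩ := exists_stopping_radius
    (P := fun ρ => c ≤ A (kCyl ρ (kMul z (min (-z.1) (ρ ^ 2 / 2), 0, 0))))
    (by positivity) (by norm_num : (1 : ℝ) < 5) (not_le.2 (hAR.trans_lt hc)) hsmall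
  obtain ⟨hr₀, hrlow, -⟩ := hcenter r hr (by linarith)
  have hrζ : r ≤ kZeta γ (kMul z (min (-z.1) (r ^ 2 / 2), 0, 0)) := by linarith
  refine ⟨_, hr₀, r, hr, hrζ, kCyl_subset_kCyl_zero hγ hr₀ hr hrζ, ?_, hcr,
    mem_kCyl_kMul_time hr (le_min (by linarith) (by positivity)) ?_⟩
  · rw [kCyl5_kMul_time]; exact not_le.1 hc5r
  · exact (min_le_right _ _).trans_lt (by linarith [pow_pos hr 2])

end KineticCylinders

theorem stmt11_general {d : ℕ} (γ q : ℝ) (hγ : 1 < γ) (hq : 1 < q)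
    (G : ℝ × EuclideanSpace ℝ (Fin d) × EuclideanSpace ℝ (Fin d) → ℝ)
    -- hypothesis (a): normalization on large cylinders
    (hnorm : ∀ z₀ ∈ kCyl γ
        ((0, 0, 0) : ℝ × EuclideanSpace ℝ (Fin d) × EuclideanSpace ℝ (Fin d)),
      ∀ r : ℝ, 0 < r → (2 / 3) * kZeta γ z₀ < r → kCyl r z₀ ⊆ kCyl γ (0, 0, 0) →
        kAvg (kCyl r z₀) (fun z => G z ^ q) ≤ 1)
    -- the Lebesgue differentiation theorem along kinetic cylinders
    (hLeb : ∀ᵐ z ∂(volume.restrict (kCyl γ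
        ((0, 0, 0) : ℝ × EuclideanSpace ℝ (Fin d) × EuclideanSpace ℝ (Fin d)))),
      Tendsto (fun r : ℝ =>
          kAvg (kCyl r (kMul z (min (-z.1) (r ^ 2 / 2), 0, 0))) (fun w => G w ^ q))
        (𝓝[>] 0) (𝓝 (ENNReal.ofReal (G z ^ q))))
    (s : ℝ) (hs : 1 < s)
    -- 𝒢: union of all cylinders selected by the stopping-time condition
    (𝒢 : Set (ℝ × EuclideanSpace ℝ (Fin d) × EuclideanSpace ℝ (Fin d)))
    (h𝒢 : 𝒢 = ⋃₀ {S | ∃ z₀ ∈ kCyl γ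
        ((0, 0, 0) : ℝ × EuclideanSpace ℝ (Fin d) × EuclideanSpace ℝ (Fin d)),
      ∃ r : ℝ, 0 < r ∧ r ≤ kZeta γ z₀ ∧ S = kCyl r z₀ ∧ S ⊆ kCyl γ (0, 0, 0) ∧
        kAvg (kCyl5 r z₀) (fun z => G z ^ q) < ENNReal.ofReal (s ^ q) ∧
        ENNReal.ofReal (s ^ q) ≤ kAvg S (fun z => G z ^ q)}) :
    volume (({z | G z > s} ∩ kCyl γ (0, 0, 0)) \ 𝒢) = 0 := by
  have hc : 1 < ENNReal.ofReal (s ^ q) :=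
    ENNReal.one_lt_ofReal.2 (Real.one_lt_rpow hs (by linarith))
  have hmem : ∀ z ∈ kCyl γ (0, 0, 0), s < G z →
      Tendsto (fun r : ℝ =>
          kAvg (kCyl r (kMul z (min (-z.1) (r ^ 2 / 2), 0, 0))) (fun w => G w ^ q))
        (𝓝[>] 0) (𝓝 (ENNReal.ofReal (G z ^ q))) → z ∈ 𝒢 := by
    intro z hz hGz hlim
    have hsq : ENNReal.ofReal (s ^ q) < ENNReal.ofReal (G z ^ q) :=
      (ENNReal.ofReal_lt_ofReal_iff (Real.rpow_pos_of_pos (by linarith) q)).2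
        (Real.rpow_lt_rpow (by linarith) hGz (by linarith))
    obtain ⟨z₀, hz₀, r, hr, hrζ, hsub, h5, hcr, hzr⟩ :=
      exists_stopping_kCyl (by linarith) (fun S => kAvg S (fun w => G w ^ q)) hnorm hc hz
        ((hlim.eventually (eventually_gt_nhds hsq)).mono fun _ => le_of_lt)
    rw [h𝒢]
    exact ⟨_, ⟨z₀, hz₀, r, hr, hrζ, rfl, hsub, h5, hcr⟩, hzr⟩
  refine measure_mono_null (t := {z | ¬ Tendsto (fun r : ℝ =>
      kAvg (kCyl r (kMul z (min (-z.1) (r ^ 2 / 2), 0, 0))) (fun w => G w ^ q))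
        (𝓝[>] 0) (𝓝 (ENNReal.ofReal (G z ^ q)))} ∩ kCyl γ (0, 0, 0))
    (fun z ⟨⟨hGz, hz⟩, hz𝒢⟩ => ⟨fun hlim => hz𝒢 (hmem z hz hGz hlim), hz⟩) ?_
  exact nonpos_iff_eq_zero.1 ((Measure.le_restrict_apply _ _).trans (ae_iff.1 hLeb).le)

theorem stmt11 {d : ℕ} (γ q : ℝ) (hγ : 1 < γ) (hq : 1 < q)
    (G : ℝ × EuclideanSpace ℝ (Fin d) × EuclideanSpace ℝ (Fin d) → ℝ)
    (hGmeas : Measurable G) (hGnonneg : ∀ z, 0 ≤ G z)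
    (hGsupp : Function.support G ⊆
      kCyl γ ((0, 0, 0) : ℝ × EuclideanSpace ℝ (Fin d) × EuclideanSpace ℝ (Fin d)))
    (hGLq : MemLp G (ENNReal.ofReal q))
    -- hypothesis (a): normalization on large cylinders
    (hnorm : ∀ z₀ ∈ kCyl γ
        ((0, 0, 0) : ℝ × EuclideanSpace ℝ (Fin d) × EuclideanSpace ℝ (Fin d)),
      ∀ r : ℝ, 0 < r → (2 / 3) * kZeta γ z₀ < r → kCyl r z₀ ⊆ kCyl γ (0, 0, 0) →
        kAvg (kCyl r z₀) (fun z => G z ^ q) ≤ 1)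
    -- the Lebesgue differentiation theorem along kinetic cylinders
    (hLeb : ∀ᵐ z ∂(volume.restrict (kCyl γ
        ((0, 0, 0) : ℝ × EuclideanSpace ℝ (Fin d) × EuclideanSpace ℝ (Fin d)))),
      Tendsto (fun r : ℝ =>
          kAvg (kCyl r (kMul z (min (-z.1) (r ^ 2 / 2), 0, 0))) (fun w => G w ^ q))
        (𝓝[>] 0) (𝓝 (ENNReal.ofReal (G z ^ q))))
    (s : ℝ) (hs : 1 < s)
    -- 𝒢: union of all cylinders selected by the stopping-time condition
    (𝒢 : Set (ℝ × EuclideanSpace ℝ (Fin d) × EuclideanSpace ℝ (Fin d)))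
    (h𝒢 : 𝒢 = ⋃₀ {S | ∃ z₀ ∈ kCyl γ
        ((0, 0, 0) : ℝ × EuclideanSpace ℝ (Fin d) × EuclideanSpace ℝ (Fin d)),
      ∃ r : ℝ, 0 < r ∧ r ≤ kZeta γ z₀ ∧ S = kCyl r z₀ ∧ S ⊆ kCyl γ (0, 0, 0) ∧
        kAvg (kCyl5 r z₀) (fun z => G z ^ q) < ENNReal.ofReal (s ^ q) ∧
        ENNReal.ofReal (s ^ q) ≤ kAvg S (fun z => G z ^ q)}) :
    volume (({z | G z > s} ∩ kCyl γ (0, 0, 0)) \ 𝒢) = 0 :=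
  stmt11_general γ q hγ hq G hnorm hLeb s hs 𝒢 h𝒢
end
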